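/- arXiv:1708.06974 — 9 statements merged into one kernel-verified Lean document; each statement's English description precedes it below -/
import Mathlib

section
/- For every i with 0 ≤ i ≤ q − 1 and every j with 1 ≤ j ≤ q − 1, every element of the set S_{i,j} = {(iq − jq^2 + k₁)(q^3 − q + 1) + (jq^2 − i + k₂)(q^3 + 1) : k₁, k₂ integers, 0 ≤ k₁ ≤ q − 1, 0 ≤ k₂ ≤ q^3 − q − jq^2 + i} is a nonnegative integer that belongs to T but does not belong to S. -/
/-- The numerical semigroup `S` generated by `q^3 - q + 1` and `q^3 + 1`. -/
def gkS (q : ℤ) : AddSubmonoid ℤ :=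
  AddSubmonoid.closure {q ^ 3 - q + 1, q ^ 3 + 1}

/-- The numerical semigroup `T` generated by `q^3 - q + 1`, `q^3 + 1` and the numbers
`q^3 + i(q^4 - q^3 - q^2 + q - 1)` for `i = 0, …, q - 1`. -/
def gkT (q : ℤ) : AddSubmonoid ℤ :=
  AddSubmonoid.closure ({q ^ 3 - q + 1, q ^ 3 + 1} ∪
    {x : ℤ | ∃ i : ℤ, 0 ≤ i ∧ i ≤ q - 1 ∧
      x = q ^ 3 + i * (q ^ 4 - q ^ 3 - q ^ 2 + q - 1)})

/-- The set `S_{i,j}`. -/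
def gkSij (q i j : ℤ) : Set ℤ :=
  {x : ℤ | ∃ k₁ k₂ : ℤ, 0 ≤ k₁ ∧ k₁ ≤ q - 1 ∧ 0 ≤ k₂ ∧ k₂ ≤ q ^ 3 - q - j * q ^ 2 + i ∧
    x = (i * q - j * q ^ 2 + k₁) * (q ^ 3 - q + 1) + (j * q ^ 2 - i + k₂) * (q ^ 3 + 1)}

/-!
Write `a = q^3 - q + 1` and `b = q^3 + 1`, which are coprime since `q^2 a - (q^2 - 1) b = 1`.
An element `u a + v b` of `S_{i,j}` has `u ≤ -1` and `0 ≤ v ≤ q^3 - q < a`. Any other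
representation `m a + n b` with `m, n ≥ 0` differs from it by a multiple of `(b, -a)`, which would
force `v - n` to be a positive multiple of `a`; hence the element is not in `S`. It is in `T`
because it equals `k₁ a + k₂ b + (j - 1) q^3 + (q^3 + i(q^4 - q^3 - q^2 + q - 1))`.
-/

theorem AddSubmonoid.int_mul_mem {M : AddSubmonoid ℤ} {c n : ℤ} (hc : c ∈ M) (hn : 0 ≤ n) :
    n * c ∈ M := by
  lift n to ℕ using hn
  simpa [nsmul_eq_mul] using M.nsmul_mem hc n

theorem Int.mul_add_mul_notMem_closure_pair {a b u v : ℤ} (ha : 0 < a) (hb : 0 < b)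
    (hab : IsCoprime a b) (hu : u < 0) (hv : v < a) :
    u * a + v * b ∉ AddSubmonoid.closure {a, b} := by
  rw [AddSubmonoid.mem_closure_pair]
  rintro ⟨m, n, hmn⟩
  simp only [nsmul_eq_mul] at hmn
  have hshift : ((m : ℤ) - u) * a = (v - n) * b := by linear_combination hmn
  have hpos : 0 < v - n := by
    have : 0 < ((m : ℤ) - u) * a := mul_pos (by omega) ha
    exact pos_of_mul_pos_left (hshift ▸ this) hb.le
  have hdvd : a ∣ v - n := hab.dvd_of_dvd_mul_right ⟨(m : ℤ) - u, by linear_combination -hshift⟩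
  have := Int.le_of_dvd hpos hdvd
  omega

theorem gkS_generators_isCoprime (q : ℤ) : IsCoprime (q ^ 3 - q + 1) (q ^ 3 + 1) :=
  ⟨q ^ 2, -(q ^ 2 - 1), by ring⟩

theorem nonneg_of_mem_gkT {q x : ℤ} (hq : 2 ≤ q) (hx : x ∈ gkT q) : 0 ≤ x := by
  have hc : 0 ≤ q ^ 4 - q ^ 3 - q ^ 2 + q - 1 := by
    have hfactor : q ^ 4 - q ^ 3 - q ^ 2 + q - 1 = (q - 1) ^ 2 * q * (q + 1) - 1 := by ring
    have : 1 ≤ (q - 1) ^ 2 * q * (q + 1) := one_le_mul_of_one_le_of_one_le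
      (one_le_mul_of_one_le_of_one_le (one_le_pow₀ (by omega)) (by omega)) (by omega)
    omega
  refine AddSubmonoid.mem_nonneg.1 (AddSubmonoid.closure_le.2 ?_ hx)
  rintro y ((rfl | rfl) | ⟨i, hi0, -, rfl⟩) <;> simp only [SetLike.mem_coe, AddSubmonoid.mem_nonneg]
  · nlinarith
  · positivity
  · nlinarith [mul_nonneg hi0 hc]

section Sij

variable {q i j : ℤ}

theorem gkSij_subset_gkT (hi0 : 0 ≤ i) (hi1 : i ≤ q - 1) (hj0 : 1 ≤ j) :
    gkSij q i j ⊆ gkT q := by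
  rintro x ⟨k₁, k₂, hk₁0, -, hk₂0, -, rfl⟩
  have ha : q ^ 3 - q + 1 ∈ gkT q := AddSubmonoid.subset_closure (.inl (.inl rfl))
  have hb : q ^ 3 + 1 ∈ gkT q := AddSubmonoid.subset_closure (.inl (.inr rfl))
  have hq3 : q ^ 3 ∈ gkT q :=
    AddSubmonoid.subset_closure (.inr ⟨0, le_rfl, by omega, by ring⟩)
  have hgen : q ^ 3 + i * (q ^ 4 - q ^ 3 - q ^ 2 + q - 1) ∈ gkT q :=
    AddSubmonoid.subset_closure (.inr ⟨i, hi0, hi1, rfl⟩)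
  have hdecomp : (i * q - j * q ^ 2 + k₁) * (q ^ 3 - q + 1) + (j * q ^ 2 - i + k₂) * (q ^ 3 + 1)
      = k₁ * (q ^ 3 - q + 1) + k₂ * (q ^ 3 + 1) +
        ((j - 1) * q ^ 3 + (q ^ 3 + i * (q ^ 4 - q ^ 3 - q ^ 2 + q - 1))) := by ring
  rw [hdecomp]
  exact add_mem (add_mem (AddSubmonoid.int_mul_mem ha hk₁0) (AddSubmonoid.int_mul_mem hb hk₂0))
    (add_mem (AddSubmonoid.int_mul_mem hq3 (by omega)) hgen)

theorem notMem_gkS_of_mem_gkSij (hi0 : 0 ≤ i) (hi1 : i ≤ q - 1) (hj0 : 1 ≤ j) {x : ℤ}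
    (hx : x ∈ gkSij q i j) : x ∉ gkS q := by
  obtain ⟨k₁, k₂, -, hk₁1, -, hk₂1, rfl⟩ := hx
  have hq : 0 ≤ q := by omega
  have hu : i * q - j * q ^ 2 + k₁ < 0 := by
    have : i * q ≤ (q - 1) * q := mul_le_mul_of_nonneg_right hi1 hq
    nlinarith
  exact Int.mul_add_mul_notMem_closure_pair (by nlinarith) (by positivity)
    (gkS_generators_isCoprime q) hu (by linarith)

end Sij

theorem gk_Sij_subset_T_not_S_general (q : ℤ) (i j : ℤ)
    (hi0 : 0 ≤ i) (hi1 : i ≤ q - 1) (hj0 : 1 ≤ j) (hj1 : j ≤ q - 1) :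
    ∀ x ∈ gkSij q i j, 0 ≤ x ∧ x ∈ gkT q ∧ x ∉ gkS q := by
  intro x hx
  have hxT := gkSij_subset_gkT hi0 hi1 hj0 hx
  exact ⟨nonneg_of_mem_gkT (by omega) hxT, hxT, notMem_gkS_of_mem_gkSij hi0 hi1 hj0 hx⟩

/-- Every element of `S_{i,j}` is a nonnegative integer belonging to `T` but not to `S`. -/
theorem gk_Sij_subset_T_not_S (q : ℤ) (hq : IsPrimePow q) (i j : ℤ)
    (hi0 : 0 ≤ i) (hi1 : i ≤ q - 1) (hj0 : 1 ≤ j) (hj1 : j ≤ q - 1) :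
    ∀ x ∈ gkSij q i j, 0 ≤ x ∧ x ∈ gkT q ∧ x ∉ gkS q :=
  gk_Sij_subset_T_not_S_general q i j hi0 hi1 hj0 hj1
end

section
/- For integers 0 ≤ i ≤ q − 1 and 1 ≤ j ≤ q − 1, the set S_{i,j} has cardinality exactly q(q^3 − q − jq^2 + i + 1). -/
namespace Int

theorem injOn_add_mul_add_mul {a b m : ℤ} (c : ℤ) (hab : IsCoprime a b) (hm : m ≤ |b|) :
    Set.InjOn (fun k : ℤ × ℤ => c + k.1 * a + k.2 * b) (Set.Ico 0 m ×ˢ Set.univ) := by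
  rintro ⟨k₁, k₂⟩ ⟨⟨hk₁, hk₁m⟩, -⟩ ⟨l₁, l₂⟩ ⟨⟨hl₁, hl₁m⟩, -⟩ heq
  have hb : b ≠ 0 := by
    rintro rfl
    simp only [abs_zero] at hm
    omega
  have hdvd : b ∣ (k₁ - l₁) * a := ⟨l₂ - k₂, by linear_combination heq⟩
  have hfst : k₁ = l₁ := by
    have hbk : |b| ∣ k₁ - l₁ := (abs_dvd b _).2 (hab.symm.dvd_of_dvd_mul_right hdvd)
    exact sub_eq_zero.1 (eq_zero_of_abs_lt_dvd hbk (by rw [abs_lt]; omega))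
  subst hfst
  have hsnd : k₂ = l₂ := mul_right_cancel₀ hb (by linear_combination heq)
  rw [hsnd]

theorem ncard_setOf_add_mul_add_mul {a b m n : ℤ} (c : ℤ) (hab : IsCoprime a b)
    (hm : m ≤ |b|) (hm0 : 0 ≤ m) (hn0 : 0 ≤ n) :
    ({x | ∃ k₁ k₂ : ℤ, 0 ≤ k₁ ∧ k₁ < m ∧ 0 ≤ k₂ ∧ k₂ < n ∧ x = c + k₁ * a + k₂ * b}.ncard : ℤ)
      = m * n := by
  set f : ℤ × ℤ → ℤ := fun k => c + k.1 * a + k.2 * b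
  have hset : {x | ∃ k₁ k₂ : ℤ, 0 ≤ k₁ ∧ k₁ < m ∧ 0 ≤ k₂ ∧ k₂ < n ∧ x = c + k₁ * a + k₂ * b}
      = ↑((Finset.Ico 0 m ×ˢ Finset.Ico 0 n).image f) := by
    ext x
    simp [f, and_assoc, eq_comm]
  have hinj : Set.InjOn f ↑(Finset.Ico 0 m ×ˢ Finset.Ico 0 n) := by
    refine (injOn_add_mul_add_mul c hab hm).mono ?_
    rw [Finset.coe_product, Finset.coe_Ico]
    exact Set.prod_mono le_rfl (Set.subset_univ _)
  rw [hset, Set.ncard_coe_finset, Finset.card_image_of_injOn hinj, Finset.card_product,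
    card_Ico, card_Ico]
  push_cast [toNat_of_nonneg (sub_nonneg.2 hm0), toNat_of_nonneg (sub_nonneg.2 hn0)]
  ring

end Int

theorem gk_Sij_card_general (q : ℤ) (i j : ℤ)
    (hi0 : 0 ≤ i) (hj0 : 1 ≤ j) (hj1 : j ≤ q - 1) :
    ((gkSij q i j).ncard : ℤ) = q * (q ^ 3 - q - j * q ^ 2 + i + 1) := by
  set N := q ^ 3 - q - j * q ^ 2 + i
  have hq : 2 ≤ q := by omega
  have hN : 0 ≤ N + 1 := by nlinarith [mul_le_mul_of_nonneg_right hj1 (sq_nonneg q)]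
  have hcop : IsCoprime (q ^ 3 - q + 1) (q ^ 3 + 1) := ⟨q ^ 2, 1 - q ^ 2, by ring⟩
  have hqb : q ≤ |q ^ 3 + 1| := by
    rw [abs_of_pos (by positivity)]
    linarith [le_self_pow₀ (by omega : 1 ≤ q) (by norm_num : 3 ≠ 0)]
  have hset : gkSij q i j = {x | ∃ k₁ k₂ : ℤ, 0 ≤ k₁ ∧ k₁ < q ∧ 0 ≤ k₂ ∧ k₂ < N + 1 ∧
      x = ((i * q - j * q ^ 2) * (q ^ 3 - q + 1) + (j * q ^ 2 - i) * (q ^ 3 + 1))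
        + k₁ * (q ^ 3 - q + 1) + k₂ * (q ^ 3 + 1)} := by
    ext x
    refine exists₂_congr fun k₁ k₂ => ?_
    constructor <;> rintro ⟨h₁, h₂, h₃, h₄, rfl⟩ <;> exact ⟨h₁, by omega, h₃, by omega, by ring⟩
  rw [hset, Int.ncard_setOf_add_mul_add_mul _ hcop hqb (by omega) hN]

/-- The set `S_{i,j}` has cardinality `q(q^3 - q - jq^2 + i + 1)`. -/
theorem gk_Sij_card (q : ℤ) (hq : IsPrimePow q) (i j : ℤ)
    (hi0 : 0 ≤ i) (hi1 : i ≤ q - 1) (hj0 : 1 ≤ j) (hj1 : j ≤ q - 1) :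
    ((gkSij q i j).ncard : ℤ) = q * (q ^ 3 - q - j * q ^ 2 + i + 1) :=
  gk_Sij_card_general q i j hi0 hj0 hj1
end

section
/- Let G' = { i·q^3 + j + k·q + m·(q^2+1) + Σ_{s=1}^{q−2} n_s·(s+1)·q^2 + 1 : i, j, k, m, n_1, …, n_{q−2} nonnegative integers with i(q+1) + jq + k(q+1) + mq(q+1) + Σ_{s=1}^{q−2} n_s((s+1)q − s)(q+1) ≤ (q+1)(q^2 − 2) }. Then G' equals the image φ(𝒢); in other words, allowing arbitrary j ≥ 0 subject to the weighted inequality yields the same set of values as restricting to j ≤ q − 1 subject to the inequality i + j + k + mq + Σ_{s=1}^{q−2} n_s((s+1)q − s) ≤ q^2 − 2. -/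
/-- Tuples `(i, j, k, m, n₁, …, n_{q-2})` of nonnegative integers; the coordinate
`n : Fin (q-2) → ℕ` encodes `n_s` via `n_s = n ⟨s-1, _⟩`, i.e. index `t : Fin (q-2)`
corresponds to the paper's index `s = t + 1`. -/
abbrev GKTup (q : ℕ) := ℕ × ℕ × ℕ × ℕ × (Fin (q - 2) → ℕ)

/-- `φ(i,j,k,m,n₁,…,n_{q-2}) = i q^3 + j + k q + m (q^2+1) + Σ_{s=1}^{q-2} n_s (s+1) q^2 + 1`. -/
def gkPhi (q : ℕ) (t : GKTup q) : ℕ :=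
  t.1 * q ^ 3 + t.2.1 + t.2.2.1 * q + t.2.2.2.1 * (q ^ 2 + 1) +
    (∑ s : Fin (q - 2), t.2.2.2.2 s * ((s.1 + 2) * q ^ 2)) + 1

/-- The weight `i + j + k + m q + Σ_{s=1}^{q-2} n_s ((s+1) q - s)`. -/
def gkWt (q : ℕ) (t : GKTup q) : ℕ :=
  t.1 + t.2.1 + t.2.2.1 + t.2.2.2.1 * q +
    ∑ s : Fin (q - 2), t.2.2.2.2 s * ((s.1 + 2) * q - (s.1 + 1))

/-- The set `𝒢` of tuples with `j ≤ q - 1` and weight at most `q^2 - 2`. -/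
def gkCalG (q : ℕ) : Set (GKTup q) :=
  {t | t.2.1 ≤ q - 1 ∧ gkWt q t ≤ q ^ 2 - 2}

/-- The set of gaps `G = φ(𝒢)`. -/
def gkG (q : ℕ) : Set ℕ := gkPhi q '' gkCalG q

/-- `𝒢₁`: tuples in `𝒢` with `j = 0` and all `n_s = 0`. -/
def gkCalG1 (q : ℕ) : Set (GKTup q) :=
  {t | t ∈ gkCalG q ∧ t.2.1 = 0 ∧ ∀ s, t.2.2.2.2 s = 0}

/-- `𝒢₂`: tuples in `𝒢` with `1 ≤ j ≤ q - 1`, `k ≤ q - 1`, `j + m ≤ q - 1` and all `n_s = 0`. -/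
def gkCalG2 (q : ℕ) : Set (GKTup q) :=
  {t | t ∈ gkCalG q ∧ 1 ≤ t.2.1 ∧ t.2.1 ≤ q - 1 ∧ t.2.2.1 ≤ q - 1 ∧
    t.2.1 + t.2.2.2.1 ≤ q - 1 ∧ ∀ s, t.2.2.2.2 s = 0}

/-- `𝒢₃`: tuples in `𝒢` with `m = 0`, `k ≤ q - 1`, exactly one `n_s = 1` (the other `n`'s
being zero) and `i + k + (s+1) q ≥ q^2 - 1`. -/
def gkCalG3 (q : ℕ) : Set (GKTup q) :=
  {t | t ∈ gkCalG q ∧ t.2.2.2.1 = 0 ∧ t.2.2.1 ≤ q - 1 ∧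
    ∃ s : Fin (q - 2), t.2.2.2.2 s = 1 ∧ (∀ s', s' ≠ s → t.2.2.2.2 s' = 0) ∧
      q ^ 2 - 1 ≤ t.1 + t.2.2.1 + (s.1 + 2) * q}

/-- The `(q+1)`-weighted inequality: `i(q+1) + jq + k(q+1) + mq(q+1) +
Σ_{s=1}^{q-2} n_s ((s+1)q - s)(q+1)`. -/
def gkWt' (q : ℕ) (t : GKTup q) : ℕ :=
  t.1 * (q + 1) + t.2.1 * q + t.2.2.1 * (q + 1) + t.2.2.2.1 * q * (q + 1) +
    ∑ s : Fin (q - 2), t.2.2.2.2 s * (((s.1 + 2) * q - (s.1 + 1)) * (q + 1))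


lemma gkWt'_add_j (q : ℕ) (t : GKTup q) : gkWt' q t + t.2.1 = (q + 1) * gkWt q t := by
  simp only [gkWt', gkWt]
  have hs : (∑ s : Fin (q - 2), t.2.2.2.2 s * (((s.1 + 2) * q - (s.1 + 1)) * (q + 1)))
      = (q + 1) * ∑ s : Fin (q - 2), t.2.2.2.2 s * ((s.1 + 2) * q - (s.1 + 1)) := by
    rw [Finset.mul_sum]
    exact Finset.sum_congr rfl fun s _ => by ring
  rw [hs]; ring

/-- The set of values of `φ` on tuples with arbitrary `j ≥ 0` subject to the
`(q+1)`-weighted inequality equals `φ(𝒢)`. -/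
theorem gk_Gprime_eq_phi_image (q : ℕ) (hq : IsPrimePow q) :
    {x : ℕ | ∃ t : GKTup q, gkWt' q t ≤ (q + 1) * (q ^ 2 - 2) ∧ x = gkPhi q t}
      = gkPhi q '' gkCalG q := by
  have hq2 : 2 ≤ q := hq.two_le
  ext x
  simp only [Set.mem_setOf_eq, Set.mem_image]
  constructor
  · rintro ⟨⟨i, j, k, m, n⟩, hw, rfl⟩
    obtain ⟨a, r, hr, rfl⟩ : ∃ a r, r < q ∧ j = q * a + r :=
      ⟨j / q, j % q, Nat.mod_lt _ (by omega), (Nat.div_add_mod j q).symm⟩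
    refine ⟨(i, r, k + a, m, n), ⟨show r ≤ q - 1 by omega, ?_⟩, ?_⟩
    · have key : gkWt' q (i, r, k + a, m, n) + a * q * q
          = gkWt' q (i, q * a + r, k, m, n) + a * (q + 1) := by
        simp only [gkWt']; ring
      have hle2 : a * (q + 1) ≤ a * q * q := by
        have h1 : q + 1 ≤ q * q := by nlinarith
        calc a * (q + 1) ≤ a * (q * q) := Nat.mul_le_mul_left a h1
          _ = a * q * q := (mul_assoc a q q).symm
      have hle : gkWt' q (i, r, k + a, m, n) ≤ (q + 1) * (q ^ 2 - 2) := by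
        linarith
      have hid := gkWt'_add_j q (i, r, k + a, m, n)
      have hlt : (q + 1) * gkWt q (i, r, k + a, m, n) < (q + 1) * (q ^ 2 - 2 + 1) := by
        rw [mul_add, mul_one]
        simp only at hid
        linarith
      have := Nat.lt_of_mul_lt_mul_left hlt
      omega
    · simp only [gkPhi]; ring
  · rintro ⟨t, ⟨hj, hwt⟩, rfl⟩
    refine ⟨t, ?_, rfl⟩
    have hid := gkWt'_add_j q t
    have : (q + 1) * gkWt q t ≤ (q + 1) * (q ^ 2 - 2) :=
      Nat.mul_le_mul_left _ hwt
    omega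
end

section
/- The map φ restricted to 𝒢₁ is injective, and the image G₁ = φ(𝒢₁) has cardinality (1/2)·q^2·(q−1)·((1/3)q^2 + (5/6)q + 1/2), i.e. |G₁| = q^2(q−1)(2q^2 + 5q + 3)/12. -/
/-!
On `𝒢₁` the map `φ` reads `φ(i, 0, k, m, 0) - 1 = m + q ((k + m q) + q² i)`, and the weight
condition `i + k + m q ≤ q² - 2` forces `m < q` and `k + m q < q²`; reading off base-`q` and
base-`q²` digits gives injectivity. For fixed `m < q` the pairs `(i, k)` range over the simplex
`i + k ≤ q (q - m) - 2`, which has `binom(q (q - m), 2)` points, and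
`∑_{r=1}^{q} binom(q r, 2) = q² (q - 1) (2q² + 5q + 3) / 12`.
-/

open Finset

def pairsSumLe (c : ℕ) : Finset (ℕ × ℕ) := (range (c + 1)).biUnion antidiagonal

lemma mem_pairsSumLe {c : ℕ} {p : ℕ × ℕ} : p ∈ pairsSumLe c ↔ p.1 + p.2 ≤ c := by
  simp [pairsSumLe]

lemma card_pairsSumLe (c : ℕ) : #(pairsSumLe c) = (c + 2).choose 2 := by
  induction c with
  | zero => rfl
  | succ c ih =>
    have hdisj : Disjoint (antidiagonal (c + 1)) (pairsSumLe c) :=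
      disjoint_left.2 fun p hp hp' => by
        rw [HasAntidiagonal.mem_antidiagonal] at hp
        rw [mem_pairsSumLe] at hp'
        omega
    rw [pairsSumLe, range_add_one, biUnion_insert, ← pairsSumLe, card_union_of_disjoint hdisj,
      ih, Nat.card_antidiagonal, Nat.choose_succ_succ' (c + 2), Nat.choose_one_right]

lemma sum_range_choose_two_mul_sub (a n : ℕ) :
    ∑ m ∈ range n, ((a * (n - m)).choose 2 : ℚ) = a * n * (n + 1) * (2 * a * n + a - 3) / 12 := by
  induction n with
  | zero => simp
  | succ n ih =>
    rw [sum_range_succ']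
    simp only [Nat.add_sub_add_right, Nat.sub_zero]
    rw [ih, Nat.cast_choose_two]
    push_cast
    ring

lemma eq_and_eq_of_add_mul_eq_add_mul {q a a' b b' : ℕ} (ha : a < q) (ha' : a' < q)
    (h : a + q * b = a' + q * b') : a = a' ∧ b = b' := by
  have hq : 0 < q := by omega
  obtain ⟨hb, ha⟩ := (Nat.div_mod_unique hq).2 ⟨h, ha⟩
  obtain ⟨hb', ha'⟩ := (Nat.div_mod_unique hq).2 ⟨rfl, ha'⟩
  exact ⟨ha.symm.trans ha', hb.symm.trans hb'⟩

lemma le_sq_sub_two_iff {q m a : ℕ} (hq : 2 ≤ q) :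
    a + m * q ≤ q ^ 2 - 2 ↔ m < q ∧ a ≤ q * (q - m) - 2 := by
  rw [Nat.mul_sub, sq, mul_comm m q]
  have hq4 := Nat.mul_le_mul hq hq
  constructor
  · intro h
    have hm : m < q := lt_of_not_ge fun hm => by
      have := Nat.mul_le_mul_left q hm
      omega
    exact ⟨hm, by omega⟩
  · rintro ⟨hm, ha⟩
    have := Nat.mul_le_mul_left q (Nat.le_sub_one_of_lt hm)
    rw [Nat.mul_sub_one] at this
    omega

section G1

variable (q : ℕ)

def gkTupOfIdx (x : Σ _ : ℕ, ℕ × ℕ) : GKTup q := (x.2.1, 0, x.2.2, x.1, 0)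

def gkCalG1Idx : Finset (Σ _ : ℕ, ℕ × ℕ) :=
  (range q).sigma fun m => pairsSumLe (q * (q - m) - 2)

lemma gkWt_gkTupOfIdx (x : Σ _ : ℕ, ℕ × ℕ) :
    gkWt q (gkTupOfIdx q x) = x.2.1 + x.2.2 + x.1 * q := by
  simp [gkWt, gkTupOfIdx]

lemma gkPhi_gkTupOfIdx (x : Σ _ : ℕ, ℕ × ℕ) :
    gkPhi q (gkTupOfIdx q x) = x.1 + q * (x.2.2 + x.1 * q + q ^ 2 * x.2.1) + 1 := by
  simp only [gkPhi, gkTupOfIdx, add_zero, Pi.zero_apply, zero_mul, sum_const_zero,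
    Nat.add_right_cancel_iff]
  ring

variable {q}

lemma mem_gkCalG1Idx (hq : 2 ≤ q) (x : Σ _ : ℕ, ℕ × ℕ) :
    x ∈ gkCalG1Idx q ↔ x.2.1 + x.2.2 + x.1 * q ≤ q ^ 2 - 2 := by
  rw [le_sq_sub_two_iff hq]
  simp [gkCalG1Idx, mem_pairsSumLe]

lemma gkCalG1_eq_image (hq : 2 ≤ q) : gkCalG1 q = gkTupOfIdx q '' gkCalG1Idx q := by
  ext t
  constructor
  · rintro ⟨⟨-, hwt⟩, hj, hn⟩
    obtain ⟨i, j, k, m, n⟩ := t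
    obtain rfl : j = 0 := hj
    obtain rfl : n = 0 := funext hn
    refine ⟨⟨m, i, k⟩, (mem_gkCalG1Idx hq _).2 ?_, rfl⟩
    exact (gkWt_gkTupOfIdx q ⟨m, i, k⟩).symm.trans_le hwt
  · rintro ⟨x, hx, rfl⟩
    refine ⟨⟨Nat.zero_le _, ?_⟩, rfl, fun _ => rfl⟩
    exact (gkWt_gkTupOfIdx q x).trans_le ((mem_gkCalG1Idx hq x).1 hx)

lemma injective_gkTupOfIdx : Function.Injective (gkTupOfIdx q) := by
  rintro ⟨m, i, k⟩ ⟨m', i', k'⟩ h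
  simp_all [gkTupOfIdx]

lemma injOn_gkPhi_gkTupOfIdx (hq : 2 ≤ q) : Set.InjOn (gkPhi q ∘ gkTupOfIdx q) (gkCalG1Idx q) := by
  rintro ⟨m, i, k⟩ hx ⟨m', i', k'⟩ hx' h
  simp only [Finset.mem_coe, mem_gkCalG1Idx hq] at hx hx'
  simp only [Function.comp_apply, gkPhi_gkTupOfIdx, add_left_inj] at h
  have hm : m < q := ((le_sq_sub_two_iff hq).1 hx).1
  have hm' : m' < q := ((le_sq_sub_two_iff hq).1 hx').1
  have hq2 : 2 ≤ q ^ 2 := by nlinarith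
  obtain ⟨rfl, h⟩ := eq_and_eq_of_add_mul_eq_add_mul hm hm' h
  obtain ⟨hk, rfl⟩ := eq_and_eq_of_add_mul_eq_add_mul (by omega) (by omega) h
  obtain rfl : k = k' := by omega
  rfl

lemma card_gkCalG1Idx (hq : 2 ≤ q) :
    #(gkCalG1Idx q) * 12 = q ^ 2 * (q - 1) * (2 * q ^ 2 + 5 * q + 3) := by
  have hcard : #(gkCalG1Idx q) = ∑ m ∈ range q, (q * (q - m)).choose 2 := by
    rw [gkCalG1Idx, card_sigma]
    refine sum_congr rfl fun m hm => ?_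
    have : q ≤ q * (q - m) := Nat.le_mul_of_pos_right q (Nat.sub_pos_of_lt (mem_range.1 hm))
    rw [card_pairsSumLe, Nat.sub_add_cancel (by omega)]
  have h1 : 1 ≤ q := by omega
  rw [hcard]
  qify [h1]
  rw [sum_range_choose_two_mul_sub]
  ring

end G1

/-- `φ` is injective on `𝒢₁`, and `|φ(𝒢₁)| = q^2 (q-1) (2q^2 + 5q + 3) / 12`. -/
theorem gk_card_G1 (q : ℕ) (hq : IsPrimePow q) :
    Set.InjOn (gkPhi q) (gkCalG1 q) ∧
    (gkPhi q '' gkCalG1 q).ncard = q ^ 2 * (q - 1) * (2 * q ^ 2 + 5 * q + 3) / 12 := by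
  have hq2 : 2 ≤ q := hq.two_le
  have hinj : Set.InjOn (gkPhi q) (gkCalG1 q) := by
    rw [gkCalG1_eq_image hq2]
    exact (injOn_gkPhi_gkTupOfIdx hq2).image_of_comp
  refine ⟨hinj, ?_⟩
  rw [hinj.ncard_image, gkCalG1_eq_image hq2,
    Set.ncard_image_of_injective _ injective_gkTupOfIdx, Set.ncard_coe_finset,
    ← card_gkCalG1Idx hq2, Nat.mul_div_cancel _ (by norm_num)]
end

section
/- The map φ restricted to 𝒢₂ is injective, and the image G₂ = φ(𝒢₂) has cardinality (1/2)·q^2·(q−1)·((2/3)q^2 − (1/6)q − 5/6), i.e. |G₂| = q^2(q−1)(4q^2 − q − 5)/12. -/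
open Finset

theorem Finset.six_mul_sum_range_quadratic {R : Type*} [CommRing R] (a b c : R) (f : ℕ → R)
    (n : ℕ) (hf : ∀ t < n, f t = a * t ^ 2 + b * t + c) :
    6 * ∑ t ∈ range n, f t =
      a * (n * (n - 1) * (2 * n - 1)) + 3 * b * (n * (n - 1)) + 6 * c * n := by
  induction n with
  | zero => simp
  | succ n ih =>
    rw [sum_range_succ, mul_add, ih fun t ht => hf t (by omega), hf n n.lt_succ_self]
    push_cast
    ring

theorem Nat.eq_and_eq_of_add_mul_eq_add_mul {b a₁ a₂ c₁ c₂ : ℕ} (h₁ : a₁ < b) (h₂ : a₂ < b)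
    (h : a₁ + b * c₁ = a₂ + b * c₂) : a₁ = a₂ ∧ c₁ = c₂ := by
  have hb : 0 < b := by omega
  obtain ⟨hc₁, ha₁⟩ := (Nat.div_mod_unique hb).2 ⟨h, h₁⟩
  obtain ⟨hc₂, ha₂⟩ := (Nat.div_mod_unique hb).2 ⟨rfl, h₂⟩
  exact ⟨ha₁.symm.trans ha₂, hc₁.symm.trans hc₂⟩

theorem gkPhi_mk_zero (q i j k m : ℕ) :
    gkPhi q (i, j, k, m, 0) = (j + m) + q * (k + q * (m + q * i)) + 1 := by
  simp only [gkPhi, Pi.zero_apply, zero_mul, sum_const_zero]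
  ring

theorem gkWt_mk_zero (q i j k m : ℕ) : gkWt q (i, j, k, m, 0) = i + j + k + m * q := by
  simp [gkWt]

theorem mem_gkCalG2 {q : ℕ} {t : GKTup q} :
    t ∈ gkCalG2 q ↔ ∃ i j k m, t = (i, j, k, m, 0) ∧
      1 ≤ j ∧ j + m < q ∧ k < q ∧ i + j + k + m * q + 2 ≤ q ^ 2 := by
  constructor
  · obtain ⟨i, j, k, m, n⟩ := t
    rintro ⟨⟨-, hwt⟩, hj, -, hk, hjm, hn⟩
    obtain rfl : n = 0 := funext hn
    dsimp only at hj hk hjm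
    rw [gkWt_mk_zero] at hwt
    have : 2 ≤ q ^ 2 := by nlinarith [show 2 ≤ q by omega]
    exact ⟨i, j, k, m, rfl, hj, by omega, by omega, by omega⟩
  · rintro ⟨i, j, k, m, rfl, hj, hjm, hk, hwt⟩
    simp only [gkCalG2, gkCalG, Set.mem_ofPred_eq, gkWt_mk_zero]
    exact ⟨⟨by omega, by omega⟩, hj, by omega, by omega, by omega, fun _ => rfl⟩

theorem gkCalG2_injOn (q : ℕ) : Set.InjOn (gkPhi q) (gkCalG2 q) := by
  intro t ht t' ht' heq
  obtain ⟨i, j, k, m, rfl, hj, hjm, hk, -⟩ := mem_gkCalG2.1 ht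
  obtain ⟨i', j', k', m', rfl, -, hjm', hk', -⟩ := mem_gkCalG2.1 ht'
  rw [gkPhi_mk_zero, gkPhi_mk_zero, add_left_inj] at heq
  obtain ⟨hjm_eq, h₁⟩ := Nat.eq_and_eq_of_add_mul_eq_add_mul hjm hjm' heq
  obtain ⟨rfl, h₂⟩ := Nat.eq_and_eq_of_add_mul_eq_add_mul hk hk' h₁
  obtain ⟨rfl, rfl⟩ := Nat.eq_and_eq_of_add_mul_eq_add_mul (by omega) (by omega) h₂
  obtain rfl : j = j' := by omega
  rfl

/-- The tuples of `𝒢₂`, listed as `⟨j, k, m, i⟩`. -/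
def gkCalG2Index (q : ℕ) : Finset (Σ _ : ℕ, Σ _ : ℕ, Σ _ : ℕ, ℕ) :=
  (Ico 1 q).sigma fun j => (range q).sigma fun k => (range (q - j)).sigma fun m =>
    range (q ^ 2 - 1 - (j + k + m * q))

def gkTupOfIndex (q : ℕ) (x : Σ _ : ℕ, Σ _ : ℕ, Σ _ : ℕ, ℕ) : GKTup q :=
  (x.2.2.2, x.1, x.2.1, x.2.2.1, 0)

theorem gkTupOfIndex_injective (q : ℕ) : Function.Injective (gkTupOfIndex q) := by
  rintro ⟨j, k, m, i⟩ ⟨j', k', m', i'⟩ h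
  simp only [gkTupOfIndex, Prod.mk.injEq] at h
  obtain ⟨rfl, rfl, rfl, rfl, -⟩ := h
  rfl

theorem gkCalG2_eq_image (q : ℕ) : gkCalG2 q = gkTupOfIndex q '' gkCalG2Index q := by
  ext t
  rw [mem_gkCalG2, Set.mem_image]
  constructor
  · rintro ⟨i, j, k, m, rfl, hj, hjm, hk, hwt⟩
    refine ⟨⟨j, k, m, i⟩, ?_, rfl⟩
    simp only [gkCalG2Index, mem_coe, mem_sigma, mem_Ico, mem_range]
    omega
  · rintro ⟨⟨j, k, m, i⟩, hx, rfl⟩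
    simp only [gkCalG2Index, mem_coe, mem_sigma, mem_Ico, mem_range] at hx
    exact ⟨i, j, k, m, rfl, by omega, by omega, by omega, by omega⟩

theorem card_gkCalG2Index (q : ℕ) :
    #(gkCalG2Index q) = ∑ j ∈ Ico 1 q, ∑ k ∈ range q, ∑ m ∈ range (q - j),
      (q ^ 2 - 1 - (j + k + m * q)) := by
  simp only [gkCalG2Index, card_sigma, card_range]

theorem gkCalG2_count_fiber_rat (q j : ℕ) (hj : j ≤ q) :
    ∑ k ∈ range q, ∑ m ∈ range (q - j), ((q : ℚ) ^ 2 - 1 - (j + k + m * q)) =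
      (q : ℚ) * (q - j) * (q ^ 2 - 1 + j * (q - 2)) / 2 := by
  have hn : ((q - j : ℕ) : ℚ) = q - j := Nat.cast_sub hj
  have hm (k : ℕ) : ∑ m ∈ range (q - j), ((q : ℚ) ^ 2 - 1 - (j + k + m * q)) =
      ((q : ℚ) - j) * (q ^ 2 - 1 - j - k) - q * (q - j) * (q - j - 1) / 2 := by
    have h := six_mul_sum_range_quadratic 0 (-(q : ℚ)) (q ^ 2 - 1 - j - k)
      (fun m : ℕ => (q : ℚ) ^ 2 - 1 - (j + k + m * q)) (q - j) (fun m _ => by ring)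
    rw [hn] at h
    linear_combination h / 6
  have hk := six_mul_sum_range_quadratic 0 (-(q - j : ℚ))
    ((q - j) * (q ^ 2 - 1 - j) - q * (q - j) * (q - j - 1) / 2)
    (fun k : ℕ => ∑ m ∈ range (q - j), ((q : ℚ) ^ 2 - 1 - (j + k + m * q))) q
    (fun k _ => by rw [hm k]; ring)
  linear_combination hk / 6

theorem gkCalG2_count_rat (q : ℕ) (hq : 1 ≤ q) :
    ∑ j ∈ Ico 1 q, ∑ k ∈ range q, ∑ m ∈ range (q - j), ((q : ℚ) ^ 2 - 1 - (j + k + m * q)) =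
      (q : ℚ) ^ 2 * (q - 1) * (4 * q ^ 2 - q - 5) / 12 := by
  rw [sum_congr rfl fun j hj => gkCalG2_count_fiber_rat q j (mem_Ico.1 hj).2.le,
    sum_Ico_eq_sub _ hq, sum_range_one]
  have h := six_mul_sum_range_quadratic (-(q * (q - 2) / 2 : ℚ)) (q * (1 - 2 * q) / 2)
    (q ^ 2 * (q ^ 2 - 1) / 2)
    (fun j : ℕ => (q : ℚ) * (q - j) * (q ^ 2 - 1 + j * (q - 2)) / 2) q (fun j _ => by ring)
  linear_combination h / 6

theorem cast_gkCalG2_count (q : ℕ) :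
    ((∑ j ∈ Ico 1 q, ∑ k ∈ range q, ∑ m ∈ range (q - j), (q ^ 2 - 1 - (j + k + m * q)) : ℕ) : ℚ) =
      ∑ j ∈ Ico 1 q, ∑ k ∈ range q, ∑ m ∈ range (q - j), ((q : ℚ) ^ 2 - 1 - (j + k + m * q)) := by
  simp only [Nat.cast_sum]
  refine sum_congr rfl fun j hj => sum_congr rfl fun k hk => sum_congr rfl fun m hm => ?_
  simp only [mem_Ico, mem_range] at hj hk hm
  have hb : j + k + m * q + 1 ≤ q ^ 2 := by
    have h₁ : (j + m + 1) * q ≤ q ^ 2 := by rw [sq]; exact Nat.mul_le_mul_right q (by omega)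
    have h₂ : j ≤ j * q := Nat.le_mul_of_pos_right j (by omega)
    linarith
  rw [Nat.cast_sub (by omega), Nat.cast_sub (by omega)]
  push_cast
  ring

theorem gkCalG2_count (q : ℕ) :
    ∑ j ∈ Ico 1 q, ∑ k ∈ range q, ∑ m ∈ range (q - j), (q ^ 2 - 1 - (j + k + m * q)) =
      q ^ 2 * (q - 1) * (4 * q ^ 2 - q - 5) / 12 := by
  rcases lt_or_ge q 2 with hq | hq
  · interval_cases q <;> rfl
  refine (Nat.div_eq_of_eq_mul_left (by norm_num) ?_).symm
  have h₁ : q ≤ 4 * q ^ 2 := by nlinarith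
  have h₂ : 5 ≤ 4 * q ^ 2 - q := Nat.le_sub_of_add_le (by nlinarith)
  rw [← Nat.cast_inj (R := ℚ)]
  simp only [Nat.cast_mul, Nat.cast_pow, Nat.cast_ofNat, Nat.cast_sub h₁, Nat.cast_sub h₂,
    Nat.cast_sub (by omega : 1 ≤ q), cast_gkCalG2_count, gkCalG2_count_rat q (by omega)]
  ring

theorem gk_card_G2_general (q : ℕ) :
    Set.InjOn (gkPhi q) (gkCalG2 q) ∧
    (gkPhi q '' gkCalG2 q).ncard = q ^ 2 * (q - 1) * (4 * q ^ 2 - q - 5) / 12 := by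
  refine ⟨gkCalG2_injOn q, ?_⟩
  rw [(gkCalG2_injOn q).ncard_image, gkCalG2_eq_image,
    Set.ncard_image_of_injective _ (gkTupOfIndex_injective q), Set.ncard_coe_finset,
    card_gkCalG2Index, gkCalG2_count]

/-- `φ` is injective on `𝒢₂`, and `|φ(𝒢₂)| = q^2 (q-1) (4q^2 - q - 5) / 12`. -/
theorem gk_card_G2 (q : ℕ) (hq : IsPrimePow q) :
    Set.InjOn (gkPhi q) (gkCalG2 q) ∧
    (gkPhi q '' gkCalG2 q).ncard = q ^ 2 * (q - 1) * (4 * q ^ 2 - q - 5) / 12 :=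
  gk_card_G2_general q
end

section
/- The map φ restricted to 𝒢₃ is injective, and the image G₃ = φ(𝒢₃) has cardinality (1/2)·q^2·(q−1)·((1/3)q − 2/3), i.e. |G₃| = q^2(q−1)(q−2)/6. -/
/-!
A tuple of `𝒢₃` has the shape `(i, j, k, 0, e_s)`. Writing `i = q² - 1 - (s+2)q - k + u`, the
conditions defining `𝒢₃` become `u + j ≤ s` and `k < q`, so over each `s` the set `𝒢₃` is a
triangle of pairs `(u, j)` times `[0, q)`, and `|𝒢₃| = q · ∑_{s < q-2} C(s+2, 2) = q · C(q, 3)`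
by the hockey-stick identity. Since `j`, `k` and `s + 2` are all `< q`, they are the lowest three
base-`q` digits of `φ - 1`, and the remaining quotient is `i`; hence `φ` is injective on `𝒢₃`.
-/

open Finset

lemma Nat.eq_and_eq_of_add_mul_eq {q r r' a a' : ℕ} (hr : r < q) (hr' : r' < q)
    (h : r + q * a = r' + q * a') : r = r' ∧ a = a' := by
  have hq : 0 < q := by omega
  obtain ⟨hdiv, hmod⟩ := (Nat.div_mod_unique hq).2 ⟨h, hr⟩
  obtain ⟨hdiv', hmod'⟩ := (Nat.div_mod_unique hq).2 ⟨rfl, hr'⟩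
  exact ⟨hmod.symm.trans hmod', hdiv.symm.trans hdiv'⟩

lemma Nat.mul_choose_three (q : ℕ) : q * q.choose 3 = q ^ 2 * (q - 1) * (q - 2) / 6 := by
  have h : q ^ 2 * (q - 1) * (q - 2) = 6 * (q * q.choose 3) := by
    have := Nat.descFactorial_eq_factorial_mul_choose q 3
    simp only [Nat.descFactorial_succ, Nat.descFactorial_zero, Nat.factorial] at this
    grind
  rw [h, Nat.mul_div_cancel_left _ (by norm_num)]

lemma card_filter_add_le (n : ℕ) :
    ((range (n + 1) ×ˢ range (n + 1)).filter fun p : ℕ × ℕ => p.1 + p.2 ≤ n).card =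
      (n + 2).choose 2 := by
  rw [card_eq_sum_card_fiberwise (f := fun p : ℕ × ℕ => p.1 + p.2) (t := range (n + 1))
    fun p hp => mem_range.2 (Nat.lt_succ_of_le (mem_filter.1 hp).2)]
  have hfiber : ∀ m ∈ range (n + 1), ((((range (n + 1) ×ˢ range (n + 1)).filter
      fun p : ℕ × ℕ => p.1 + p.2 ≤ n).filter fun p => p.1 + p.2 = m)) = antidiagonal m := by
    intro m hm
    ext ⟨a, b⟩
    simp only [mem_filter, mem_product, mem_range, HasAntidiagonal.mem_antidiagonal] at hm ⊢
    omega
  rw [sum_congr rfl fun m hm => by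
    rw [hfiber m hm, Nat.card_antidiagonal, ← Nat.choose_one_right (m + 1)]]
  exact Nat.sum_range_add_choose n 1

lemma sum_range_add_two_choose_two (N : ℕ) :
    ∑ s ∈ range N, (s + 2).choose 2 = (N + 2).choose 3 := by
  cases N with
  | zero => rfl
  | succ n => simpa [add_right_comm] using Nat.sum_range_add_choose n 2

section

variable {q : ℕ}

lemma Fin.add_two_lt_and_add_two_mul_add_le_sq (s : Fin (q - 2)) :
    (s : ℕ) + 2 < q ∧ ((s : ℕ) + 2) * q + q ≤ q ^ 2 := by
  have hs : (s : ℕ) + 2 < q := by omega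
  refine ⟨hs, ?_⟩
  calc ((s : ℕ) + 2) * q + q = ((s : ℕ) + 3) * q := by ring
    _ ≤ q * q := Nat.mul_le_mul_right q hs
    _ = q ^ 2 := (sq q).symm

lemma gkPhi_single (s : Fin (q - 2)) (i j k : ℕ) :
    gkPhi q (i, j, k, 0, Pi.single s 1) = j + q * (k + q * ((s + 2) + q * i)) + 1 := by
  simp only [gkPhi, Pi.single_apply, ite_mul, one_mul, zero_mul, sum_ite_eq', mem_univ, if_true]
  ring

lemma gkWt_single (s : Fin (q - 2)) (i j k : ℕ) :
    gkWt q (i, j, k, 0, Pi.single s 1) = i + j + k + ((s + 2) * q - (s + 1)) := by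
  simp only [gkWt, Pi.single_apply, ite_mul, one_mul, zero_mul, sum_ite_eq', mem_univ, if_true]
  ring

lemma exists_eq_single_of_mem_gkCalG3 {t : GKTup q} (ht : t ∈ gkCalG3 q) :
    ∃ s i j k, t = (i, j, k, 0, Pi.single s 1) := by
  obtain ⟨i, j, k, m, n⟩ := t
  obtain ⟨-, hm, -, s, hs, hne, -⟩ := ht
  refine ⟨s, i, j, k, ?_⟩
  simp only at hm hs hne
  subst hm
  congr
  funext s'
  by_cases h : s' = s
  · subst h; simp [hs]
  · simp [hne s' h, h]

lemma single_mem_gkCalG3_iff (s : Fin (q - 2)) (i j k : ℕ) :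
    (i, j, k, 0, Pi.single s 1) ∈ gkCalG3 q ↔
      j ≤ q - 1 ∧ k ≤ q - 1 ∧ i + j + k + ((s + 2) * q - (s + 1)) ≤ q ^ 2 - 2 ∧
        q ^ 2 - 1 ≤ i + k + (s + 2) * q := by
  have hsingle : ∀ s' : Fin (q - 2), Pi.single (M := fun _ => ℕ) s 1 s' = 1 ↔ s' = s := by
    intro s'; by_cases h : s' = s <;> simp [h]
  simp only [gkCalG3, gkCalG, Set.mem_ofPred_eq, gkWt_single, hsingle, true_and]
  constructor
  · rintro ⟨⟨hj, hwt⟩, hk, s', rfl, -, hik⟩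
    exact ⟨hj, hk, hwt, hik⟩
  · rintro ⟨hj, hk, hwt, hik⟩
    exact ⟨⟨hj, hwt⟩, hk, s, rfl, fun s' h => by simp [h], hik⟩

def gkCalG3Params (q : ℕ) : Finset (Σ _ : Fin (q - 2), (ℕ × ℕ) × ℕ) :=
  univ.sigma fun s : Fin (q - 2) =>
    ((range (s + 1) ×ˢ range (s + 1)).filter fun p : ℕ × ℕ => p.1 + p.2 ≤ s) ×ˢ range q

def gkCalG3Param (q : ℕ) : (Σ _ : Fin (q - 2), (ℕ × ℕ) × ℕ) → GKTup q
  | ⟨s, (u, j), k⟩ => (q ^ 2 - 1 - ((s : ℕ) + 2) * q - k + u, j, k, 0, Pi.single s 1)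

lemma mem_gkCalG3Params {s : Fin (q - 2)} {u j k : ℕ} :
    ⟨s, (u, j), k⟩ ∈ gkCalG3Params q ↔ u + j ≤ s ∧ k < q := by
  simp only [gkCalG3Params, mem_sigma, mem_univ, mem_product, mem_filter, mem_range, true_and]
  omega

lemma card_gkCalG3Params : (gkCalG3Params q).card = q * q.choose 3 := by
  have hchoose : (q - 2 + 2).choose 3 = q.choose 3 := by
    rcases le_or_gt 2 q with hq | hq
    · rw [Nat.sub_add_cancel hq]
    · rw [Nat.choose_eq_zero_of_lt (by omega), Nat.choose_eq_zero_of_lt (by omega)]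
  simp only [gkCalG3Params, card_sigma, card_product, card_filter_add_le, card_range]
  rw [← sum_mul, Fin.sum_univ_eq_sum_range (fun s => (s + 2).choose 2),
    sum_range_add_two_choose_two, hchoose, mul_comm]

lemma gkCalG3_eq_image : gkCalG3 q = gkCalG3Param q '' gkCalG3Params q := by
  ext t
  constructor
  · intro ht
    obtain ⟨s, i, j, k, rfl⟩ := exists_eq_single_of_mem_gkCalG3 ht
    obtain ⟨hj, hk, hwt, hik⟩ := (single_mem_gkCalG3_iff s i j k).1 ht
    obtain ⟨hs, hsq⟩ := Fin.add_two_lt_and_add_two_mul_add_le_sq s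
    refine ⟨⟨s, (i + k + (s + 2) * q - (q ^ 2 - 1), j), k⟩, mem_gkCalG3Params.2 ?_, ?_⟩
    · generalize ((s : ℕ) + 2) * q = P at *
      generalize q ^ 2 = Q at *
      omega
    · simp only [gkCalG3Param, Prod.mk.injEq, and_true]
      generalize ((s : ℕ) + 2) * q = P at *
      generalize q ^ 2 = Q at *
      omega
  · rintro ⟨⟨s, ⟨u, j⟩, k⟩, hmem, rfl⟩
    obtain ⟨huj, hk⟩ := mem_gkCalG3Params.1 hmem
    obtain ⟨hs, hsq⟩ := Fin.add_two_lt_and_add_two_mul_add_le_sq s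
    have hP : (s : ℕ) + 2 ≤ ((s : ℕ) + 2) * q := Nat.le_mul_of_pos_right _ (by omega)
    rw [gkCalG3Param, single_mem_gkCalG3_iff]
    generalize ((s : ℕ) + 2) * q = P at *
    generalize q ^ 2 = Q at *
    omega

lemma injOn_gkPhi_comp_gkCalG3Param :
    Set.InjOn (gkPhi q ∘ gkCalG3Param q) (gkCalG3Params q) := by
  rintro ⟨s, ⟨u, j⟩, k⟩ hmem ⟨s', ⟨u', j'⟩, k'⟩ hmem' h
  simp only [mem_coe, mem_gkCalG3Params] at hmem hmem'
  have hsq := (Fin.add_two_lt_and_add_two_mul_add_le_sq s).1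
  have hsq' := (Fin.add_two_lt_and_add_two_mul_add_le_sq s').1
  simp only [Function.comp_apply, gkCalG3Param, gkPhi_single, Nat.add_right_cancel_iff] at h
  obtain ⟨rfl, hk⟩ := Nat.eq_and_eq_of_add_mul_eq (by omega) (by omega) h
  obtain ⟨rfl, hs⟩ := Nat.eq_and_eq_of_add_mul_eq hmem.2 hmem'.2 hk
  obtain ⟨hss, hi⟩ := Nat.eq_and_eq_of_add_mul_eq hsq hsq' hs
  obtain rfl : s = s' := Fin.ext (by omega)
  obtain rfl : u = u' := by simpa using hi
  rfl

end

theorem gk_card_G3_general (q : ℕ) :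
    Set.InjOn (gkPhi q) (gkCalG3 q) ∧
    (gkPhi q '' gkCalG3 q).ncard = q ^ 2 * (q - 1) * (q - 2) / 6 := by
  have hinj := injOn_gkPhi_comp_gkCalG3Param (q := q)
  rw [gkCalG3_eq_image]
  refine ⟨hinj.image_of_comp, ?_⟩
  rw [← Set.image_comp, hinj.ncard_image, Set.ncard_coe_finset, card_gkCalG3Params,
    Nat.mul_choose_three]

/-- `φ` is injective on `𝒢₃`, and `|φ(𝒢₃)| = q^2 (q-1) (q-2) / 6`. -/
theorem gk_card_G3 (q : ℕ) (hq : IsPrimePow q) :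
    Set.InjOn (gkPhi q) (gkCalG3 q) ∧
    (gkPhi q '' gkCalG3 q).ncard = q ^ 2 * (q - 1) * (q - 2) / 6 :=
  gk_card_G3_general q
end

section
/- The three sets G₁ = φ(𝒢₁), G₂ = φ(𝒢₂) and G₃ = φ(𝒢₃) are mutually disjoint: G₁ ∩ G₂ = ∅, G₁ ∩ G₃ = ∅ and G₂ ∩ G₃ = ∅. -/
theorem Nat.eq_and_eq_of_mul_add_eq_mul_add {n a b r s : ℕ} (hr : r < n) (hs : s < n)
    (h : n * a + r = n * b + s) : a = b ∧ r = s := by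
  have hn : 0 < n := by omega
  constructor
  · simpa [Nat.mul_add_div hn, Nat.div_eq_of_lt hr, Nat.div_eq_of_lt hs] using
      congrArg (· / n) h
  · simpa [Nat.mul_add_mod, Nat.mod_eq_of_lt hr, Nat.mod_eq_of_lt hs] using congrArg (· % n) h

theorem Nat.mul_add_lt_sq {n a b : ℕ} (ha : a < n) (hb : b < n) : n * a + b < n ^ 2 :=
  sq n ▸ Nat.mul_add_lt_mul_of_lt_of_lt ha hb

section

variable {q : ℕ}

lemma gkPhi_of_forall_eq_zero (t : GKTup q) (hn : ∀ s, t.2.2.2.2 s = 0) :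
    gkPhi q t = q * (q ^ 2 * t.1 + (q * t.2.2.2.1 + t.2.2.1)) + (t.2.1 + t.2.2.2.1) + 1 := by
  simp only [gkPhi, hn, zero_mul, Finset.sum_const_zero]
  ring

lemma gkWt_of_forall_eq_zero (t : GKTup q) (hn : ∀ s, t.2.2.2.2 s = 0) :
    gkWt q t = t.1 + t.2.1 + t.2.2.1 + t.2.2.2.1 * q := by
  simp only [gkWt, hn, zero_mul, Finset.sum_const_zero, add_zero]

lemma gkPhi_of_eq_single (t : GKTup q) (s : Fin (q - 2)) (hm : t.2.2.2.1 = 0)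
    (hs : t.2.2.2.2 s = 1) (hne : ∀ s', s' ≠ s → t.2.2.2.2 s' = 0) :
    gkPhi q t = q * (q ^ 2 * t.1 + (q * (s.1 + 2) + t.2.2.1)) + t.2.1 + 1 := by
  rw [gkPhi, Finset.sum_eq_single_of_mem s (Finset.mem_univ s)
    fun s' _ h => by rw [hne s' h, zero_mul], hs, hm]
  ring

lemma exists_of_mem_gkCalG1 (hq : 2 ≤ q) {t : GKTup q} (ht : t ∈ gkCalG1 q) :
    ∃ i k m, gkPhi q t = q * (q ^ 2 * i + (q * m + k)) + m + 1 ∧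
      m < q ∧ q * m + k < q ^ 2 ∧ i + k + q * m + 2 ≤ q ^ 2 := by
  obtain ⟨⟨-, hwt⟩, hj, hn⟩ := ht
  rw [gkWt_of_forall_eq_zero t hn, hj] at hwt
  have hq2 : 2 ≤ q ^ 2 := hq.trans (Nat.le_self_pow two_ne_zero q)
  have hwt' : t.1 + t.2.2.1 + q * t.2.2.2.1 + 2 ≤ q ^ 2 := by
    linarith [Nat.sub_add_cancel hq2]
  refine ⟨t.1, t.2.2.1, t.2.2.2.1, ?_, by nlinarith, by linarith, hwt'⟩
  rw [gkPhi_of_forall_eq_zero t hn, hj, zero_add]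

lemma exists_of_mem_gkCalG2 {t : GKTup q} (ht : t ∈ gkCalG2 q) :
    ∃ i j k m, gkPhi q t = q * (q ^ 2 * i + (q * m + k)) + (j + m) + 1 ∧
      1 ≤ j ∧ j + m < q ∧ k < q ∧ i + j + k + q * m + 2 ≤ q ^ 2 := by
  obtain ⟨⟨-, hwt⟩, hj, -, hk, hjm, hn⟩ := ht
  rw [gkWt_of_forall_eq_zero t hn] at hwt
  have hq2 : 2 ≤ q ^ 2 := by nlinarith [show 2 ≤ q by omega]
  exact ⟨t.1, t.2.1, t.2.2.1, t.2.2.2.1, gkPhi_of_forall_eq_zero t hn, hj, by omega, by omega,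
    by linarith [Nat.sub_add_cancel hq2]⟩

lemma exists_of_mem_gkCalG3 {t : GKTup q} (ht : t ∈ gkCalG3 q) :
    ∃ i j k S, gkPhi q t = q * (q ^ 2 * i + (q * S + k)) + j + 1 ∧
      j < q ∧ k < q ∧ 2 ≤ S ∧ S < q ∧ q ^ 2 ≤ i + k + q * S + 1 := by
  obtain ⟨⟨hj, -⟩, hm, hk, s, hs, hne, hwt⟩ := ht
  have hS : s.1 + 2 < q := by omega
  exact ⟨t.1, t.2.1, t.2.2.1, s.1 + 2, gkPhi_of_eq_single t s hm hs hne, by omega, by omega,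
    by omega, hS, by linarith [Nat.sub_le_iff_le_add.mp hwt]⟩

lemma disjoint_gkPhi_image_gkCalG1_gkCalG2 :
    Disjoint (gkPhi q '' gkCalG1 q) (gkPhi q '' gkCalG2 q) := by
  rw [Set.disjoint_left]
  rintro _ ⟨t, ht, rfl⟩ ⟨u, hu, hx⟩
  obtain ⟨i', j', k', m', hu', hj', hjm', hk', -⟩ := exists_of_mem_gkCalG2 hu
  obtain ⟨i, k, m, ht', hm, hlow, -⟩ := exists_of_mem_gkCalG1 (by omega) ht
  rw [ht', hu'] at hx
  obtain ⟨hN, hr⟩ := Nat.eq_and_eq_of_mul_add_eq_mul_add (by omega) hm (Nat.add_right_cancel hx)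
  obtain ⟨-, hlow'⟩ := Nat.eq_and_eq_of_mul_add_eq_mul_add
    (Nat.mul_add_lt_sq (by omega) hk') hlow hN
  have := Nat.mul_le_mul_left q (show m' + 1 ≤ m by omega)
  linarith

lemma disjoint_gkPhi_image_gkCalG1_gkCalG3 :
    Disjoint (gkPhi q '' gkCalG1 q) (gkPhi q '' gkCalG3 q) := by
  rw [Set.disjoint_left]
  rintro _ ⟨t, ht, rfl⟩ ⟨u, hu, hx⟩
  obtain ⟨i', j', k', S, hu', hj', hk', hS2, hS, hwt'⟩ := exists_of_mem_gkCalG3 hu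
  obtain ⟨i, k, m, ht', hm, hlow, hwt⟩ := exists_of_mem_gkCalG1 (by omega) ht
  rw [ht', hu'] at hx
  obtain ⟨hN, -⟩ := Nat.eq_and_eq_of_mul_add_eq_mul_add hj' hm (Nat.add_right_cancel hx)
  obtain ⟨hi, hlow'⟩ := Nat.eq_and_eq_of_mul_add_eq_mul_add (Nat.mul_add_lt_sq hS hk') hlow hN
  linarith

lemma disjoint_gkPhi_image_gkCalG2_gkCalG3 :
    Disjoint (gkPhi q '' gkCalG2 q) (gkPhi q '' gkCalG3 q) := by
  rw [Set.disjoint_left]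
  rintro _ ⟨t, ht, rfl⟩ ⟨u, hu, hx⟩
  obtain ⟨i, j, k, m, ht', -, hjm, hk, hwt⟩ := exists_of_mem_gkCalG2 ht
  obtain ⟨i', j', k', S, hu', hj', hk', -, hS, hwt'⟩ := exists_of_mem_gkCalG3 hu
  rw [ht', hu'] at hx
  obtain ⟨hN, -⟩ := Nat.eq_and_eq_of_mul_add_eq_mul_add hj' hjm (Nat.add_right_cancel hx)
  obtain ⟨hi, hlow⟩ := Nat.eq_and_eq_of_mul_add_eq_mul_add
    (Nat.mul_add_lt_sq hS hk') (Nat.mul_add_lt_sq (by omega) hk) hN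
  linarith

end

theorem gk_G1_G2_G3_disjoint_general (q : ℕ) :
    (gkPhi q '' gkCalG1 q) ∩ (gkPhi q '' gkCalG2 q) = ∅ ∧
    (gkPhi q '' gkCalG1 q) ∩ (gkPhi q '' gkCalG3 q) = ∅ ∧
    (gkPhi q '' gkCalG2 q) ∩ (gkPhi q '' gkCalG3 q) = ∅ :=
  ⟨disjoint_gkPhi_image_gkCalG1_gkCalG2.inter_eq, disjoint_gkPhi_image_gkCalG1_gkCalG3.inter_eq,
    disjoint_gkPhi_image_gkCalG2_gkCalG3.inter_eq⟩

/-- The sets `G₁ = φ(𝒢₁)`, `G₂ = φ(𝒢₂)` and `G₃ = φ(𝒢₃)` are mutually disjoint. -/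
theorem gk_G1_G2_G3_disjoint (q : ℕ) (hq : IsPrimePow q) :
    (gkPhi q '' gkCalG1 q) ∩ (gkPhi q '' gkCalG2 q) = ∅ ∧
    (gkPhi q '' gkCalG1 q) ∩ (gkPhi q '' gkCalG3 q) = ∅ ∧
    (gkPhi q '' gkCalG2 q) ∩ (gkPhi q '' gkCalG3 q) = ∅ :=
  gk_G1_G2_G3_disjoint_general q
end

section
/- The largest element of the set G is q^5 − 2q^3 + 1; that is, q^5 − 2q^3 + 1 ∈ G and every element of G is at most q^5 − 2q^3 + 1. Moreover, every tuple (i, j, k, m, n_1, …, n_{q−2}) producing an element of G satisfies i ≤ q^2 − 2, k ≤ q^2 − 2, m ≤ q − 1 and n_s ≤ ⌊(q+1)/(s+1)⌋ for each s. -/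
/-! Each coordinate contributes to `φ` at most `q³` times what it contributes to the weight
(for `n_s` because `(s+1) q² ≤ ((s+1) q - s) q³`), so `φ ≤ q³ · wt + 1 ≤ (q² - 2) q³ + 1`, with
equality at `i = q² - 2` and all other coordinates zero. The coordinate bounds follow from
`wt ≤ q² - 2` by dropping the other summands of the weight. -/

theorem Nat.le_sub_one_of_mul_le_sq_sub_two {m q : ℕ} (hq : 1 ≤ q) (h : m * q ≤ q ^ 2 - 2) :
    m ≤ q - 1 := by
  have : m * q < q * q := by
    rw [← sq]; have := Nat.one_le_pow 2 q hq; omega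
  have := Nat.lt_of_mul_lt_mul_right this
  omega

theorem Nat.le_div_of_mul_mul_sub_le_sq_sub_two {n b q : ℕ} (hq : 1 ≤ q)
    (h : n * ((b + 1) * q - b) ≤ q ^ 2 - 2) : n ≤ (q + 1) / (b + 1) := by
  rw [Nat.le_div_iff_mul_le (by omega : 0 < b + 1)]
  by_contra! hlt
  have hn : n ≠ 0 := by rintro rfl; simp at hlt
  obtain ⟨r, rfl⟩ : ∃ r, q = r + 1 := ⟨q - 1, by omega⟩
  have hcoef : (b + 1) * (r + 1) - b = (b + 1) * r + 1 := by
    rw [mul_add_one]; omega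
  rw [hcoef, show (r + 1) ^ 2 = r * r + 2 * r + 1 by ring,
    show n * ((b + 1) * r + 1) = n * (b + 1) * r + n by ring] at h
  -- `n (b+1) ≥ r + 3` makes `n ((b+1) r + 1) ≥ (r + 3) r > r² + 2r - 1`
  have : (r + 3) * r ≤ n * (b + 1) * r := Nat.mul_le_mul_right _ (by omega)
  rw [show (r + 3) * r = r * r + 3 * r by ring] at this
  omega

theorem Nat.succ_mul_sq_le_mul_sub_mul_cube {b q : ℕ} (hq : 2 ≤ q) :
    (b + 1) * q ^ 2 ≤ ((b + 1) * q - b) * q ^ 3 := by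
  have hcoef : b + 1 ≤ (b + 1) * q - b := by
    have := Nat.mul_le_mul_left (b + 1) hq; omega
  calc (b + 1) * q ^ 2 ≤ (b + 1) * q ^ 3 := by gcongr <;> omega
    _ ≤ ((b + 1) * q - b) * q ^ 3 := by gcongr

section GK

variable {q : ℕ}

theorem gkPhi_le_gkWt_mul_cube (hq : 2 ≤ q) (t : GKTup q) :
    gkPhi q t ≤ gkWt q t * q ^ 3 + 1 := by
  obtain ⟨i, j, k, m, n⟩ := t
  have hsum : ∑ s : Fin (q - 2), n s * ((s.1 + 2) * q ^ 2) ≤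
      (∑ s : Fin (q - 2), n s * ((s.1 + 2) * q - (s.1 + 1))) * q ^ 3 := by
    rw [Finset.sum_mul]
    refine Finset.sum_le_sum fun s _ => ?_
    rw [mul_assoc]
    exact Nat.mul_le_mul_left _ (Nat.succ_mul_sq_le_mul_sub_mul_cube hq)
  have hj : j ≤ j * q ^ 3 := Nat.le_mul_of_pos_right _ (by positivity)
  have hk : k * q ≤ k * q ^ 3 := Nat.mul_le_mul_left _ (Nat.le_self_pow (by norm_num) q)
  have hm : m * (q ^ 2 + 1) ≤ m * q * q ^ 3 := by
    have hq4 : q ^ 2 + 1 ≤ q * q ^ 3 := by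
      have : 4 ≤ q ^ 2 := by nlinarith
      nlinarith
    rw [mul_assoc]
    exact Nat.mul_le_mul_left _ hq4
  simp only [gkPhi, gkWt]
  linarith

theorem isGreatest_gkG (hq : 2 ≤ q) : IsGreatest (gkG q) (q ^ 5 - 2 * q ^ 3 + 1) := by
  have htop : (q ^ 2 - 2) * q ^ 3 + 1 = q ^ 5 - 2 * q ^ 3 + 1 := by rw [Nat.sub_mul, ← pow_add]
  refine ⟨⟨(q ^ 2 - 2, 0, 0, 0, fun _ => 0), ⟨by simp, by simp [gkWt]⟩, by simp [gkPhi, htop]⟩, ?_⟩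
  rintro _ ⟨t, ht, rfl⟩
  calc gkPhi q t ≤ gkWt q t * q ^ 3 + 1 := gkPhi_le_gkWt_mul_cube hq t
    _ ≤ (q ^ 2 - 2) * q ^ 3 + 1 := by gcongr; exact ht.2
    _ = q ^ 5 - 2 * q ^ 3 + 1 := htop

theorem coord_bounds_of_mem_gkCalG (hq : 1 ≤ q) {t : GKTup q} (ht : t ∈ gkCalG q) :
    t.1 ≤ q ^ 2 - 2 ∧ t.2.2.1 ≤ q ^ 2 - 2 ∧ t.2.2.2.1 ≤ q - 1 ∧
      ∀ s : Fin (q - 2), t.2.2.2.2 s ≤ (q + 1) / (s.1 + 2) := by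
  obtain ⟨i, j, k, m, n⟩ := t
  have hw : gkWt q (i, j, k, m, n) ≤ q ^ 2 - 2 := ht.2
  have hn (s : Fin (q - 2)) : n s * ((s.1 + 2) * q - (s.1 + 1)) ≤ gkWt q (i, j, k, m, n) :=
    (Finset.single_le_sum (f := fun s : Fin (q - 2) => n s * ((s.1 + 2) * q - (s.1 + 1)))
      (fun _ _ => Nat.zero_le _) (Finset.mem_univ s)).trans
      (Nat.le_add_left _ _)
  refine ⟨?_, ?_, Nat.le_sub_one_of_mul_le_sq_sub_two hq ?_,
    fun s => Nat.le_div_of_mul_mul_sub_le_sq_sub_two hq ((hn s).trans hw)⟩ <;>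
    simp only [gkWt] at hw ⊢ <;> omega

end GK

/-- The largest element of `G` is `q^5 - 2q^3 + 1`; moreover every tuple in `𝒢` satisfies
`i ≤ q^2 - 2`, `k ≤ q^2 - 2`, `m ≤ q - 1` and `n_s ≤ ⌊(q+1)/(s+1)⌋` for each `s`. -/
theorem gk_largest_gap (q : ℕ) (hq : IsPrimePow q) :
    (q ^ 5 - 2 * q ^ 3 + 1 ∈ gkG q ∧ ∀ x ∈ gkG q, x ≤ q ^ 5 - 2 * q ^ 3 + 1) ∧
    (∀ t ∈ gkCalG q, t.1 ≤ q ^ 2 - 2 ∧ t.2.2.1 ≤ q ^ 2 - 2 ∧ t.2.2.2.1 ≤ q - 1 ∧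
      ∀ s : Fin (q - 2), t.2.2.2.2 s ≤ (q + 1) / (s.1 + 2)) := by
  exact ⟨isGreatest_gkG hq.two_le, fun t ht => coord_bounds_of_mem_gkCalG hq.one_lt.le ht⟩
end

section
/- Every integer a with 1 ≤ a ≤ q^3 − 2 belongs to G, while q^3 − 1 ∉ G and q^3 ∉ G; consequently the smallest positive element of ℕ \ G is q^3 − 1. -/
/-! Write `a - 1 = c₂ q² + c₁ q + c₀` in base `q`. If `c₂ ≤ c₀`, take `m = c₂`, `j = c₀ - c₂`,
`k = c₁`; if `c₀ < c₂` and `c₂ ≥ 2`, take `n_{c₂-1} = 1`, `j = c₀`, `k = c₁`; the remaining case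
`a - 1 = (q + c₁) q` is covered by `k = q + c₁`. The bound `a ≤ q³ - 2` is exactly what makes the
weight fit when `c₂ = q - 1`.

Conversely, put `N = Σ (s+1) n_s` and `T = Σ n_s`, so that `N ≤ q T`. If `φ(t) = q³ + 1 - e` with
`e ∈ {1, 2}`, then `i = 0` and, reading the equation modulo `q`, `j + m + e = d q`; dividing the
rest by `q` gives `d + k + (m + N) q = q²`, so `m + N < q` and the weight bound becomes
`j + T + 2 ≤ d + N`. Hence `d q = j + m + e < d + q`, i.e. `d = 1`; then `T = 0`, so `N = 0`,
and the weight bound reads `j + 2 ≤ 1`. -/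

namespace GK

variable {q : ℕ}

lemma gkPhi_eq (t : GKTup q) :
    gkPhi q t = t.1 * q ^ 3 + t.2.1 + t.2.2.1 * q + t.2.2.2.1 * (q ^ 2 + 1) +
      (∑ s : Fin (q - 2), t.2.2.2.2 s * (s.1 + 2)) * q ^ 2 + 1 := by
  simp only [gkPhi, Finset.sum_mul, mul_assoc]

lemma gkWt_add_eq (hq : 1 ≤ q) (t : GKTup q) :
    gkWt q t + ∑ s : Fin (q - 2), t.2.2.2.2 s * (s.1 + 2) =
      t.1 + t.2.1 + t.2.2.1 + t.2.2.2.1 * q +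
        (∑ s : Fin (q - 2), t.2.2.2.2 s * (s.1 + 2)) * q + ∑ s : Fin (q - 2), t.2.2.2.2 s := by
  have hterm (s : Fin (q - 2)) : t.2.2.2.2 s * ((s.1 + 2) * q - (s.1 + 1)) +
      t.2.2.2.2 s * (s.1 + 2) = t.2.2.2.2 s * (s.1 + 2) * q + t.2.2.2.2 s := by
    have : s.1 + 1 ≤ (s.1 + 2) * q := by nlinarith
    zify [this]
    ring
  have hsum := Finset.sum_congr rfl (fun s (_ : s ∈ Finset.univ) => hterm s)
  rw [Finset.sum_add_distrib, Finset.sum_add_distrib, ← Finset.sum_mul] at hsum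
  simp only [gkWt]
  omega

lemma sum_mul_add_two_le (n : Fin (q - 2) → ℕ) :
    ∑ s : Fin (q - 2), n s * (s.1 + 2) ≤ q * ∑ s : Fin (q - 2), n s := by
  rw [Finset.mul_sum]
  refine Finset.sum_le_sum fun s _ => ?_
  rw [mul_comm q]
  exact Nat.mul_le_mul_left _ (by omega)

lemma add_ne_cube_of_weight_le {i j k m N T e : ℕ} (hq : 2 ≤ q) (hNT : N ≤ q * T)
    (he : e ∈ Finset.Icc 1 2) (hwt : i + j + k + m * q + N * q + T + 2 ≤ q ^ 2 + N) :
    i * q ^ 3 + j + k * q + m * (q ^ 2 + 1) + N * q ^ 2 + e ≠ q ^ 3 := by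
  rw [Finset.mem_Icc] at he
  intro h
  obtain rfl : i = 0 := by
    by_contra hi
    have : q ^ 3 ≤ i * q ^ 3 := Nat.le_mul_of_pos_left _ (Nat.pos_of_ne_zero hi)
    omega
  have hsplit : j + m + e + q * (k + m * q + N * q) = q * q ^ 2 := by linarith
  obtain ⟨d, hd⟩ : q ∣ j + m + e :=
    (Nat.dvd_add_left (dvd_mul_right q _)).mp (hsplit ▸ dvd_mul_right q _)
  have hdx : d + k + m * q + N * q = q ^ 2 :=
    Nat.eq_of_mul_eq_mul_left (by omega : 0 < q) (by rw [← hsplit, hd]; ring)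
  have hmN : m + N < q := by
    refine Nat.lt_of_mul_lt_mul_right (a := q) ?_
    nlinarith
  have hjN : j + T + 2 ≤ d + N := by omega
  obtain rfl : d = 1 := by
    rcases d with _ | _ | d
    · omega
    · rfl
    · nlinarith
  obtain rfl : T = 0 := by omega
  omega

lemma gkPhi_add_ne_cube_succ (hq : 2 ≤ q) {t : GKTup q} (ht : t ∈ gkCalG q) {e : ℕ}
    (he : e ∈ Finset.Icc 1 2) : gkPhi q t + e ≠ q ^ 3 + 1 := by
  obtain ⟨-, hwt⟩ := ht
  have hq2 : 4 ≤ q ^ 2 := by nlinarith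
  have hwt' := gkWt_add_eq (by omega) t
  have := add_ne_cube_of_weight_le (i := t.1) (j := t.2.1) (k := t.2.2.1) (m := t.2.2.2.1) hq
    (sum_mul_add_two_le t.2.2.2.2) he (by omega)
  rw [gkPhi_eq]
  omega

lemma cube_sub_one_notMem_gkG (hq : 2 ≤ q) : q ^ 3 - 1 ∉ gkG q := by
  rintro ⟨t, ht, hphi⟩
  have : 1 ≤ q ^ 3 := Nat.one_le_pow _ _ (by omega)
  exact gkPhi_add_ne_cube_succ hq ht (by simp : 2 ∈ Finset.Icc 1 2) (by omega)

lemma cube_notMem_gkG (hq : 2 ≤ q) : q ^ 3 ∉ gkG q := by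
  rintro ⟨t, ht, hphi⟩
  exact gkPhi_add_ne_cube_succ hq ht (by simp : 1 ∈ Finset.Icc 1 2) (by omega)

lemma mem_gkG_of_weight_le {j k m : ℕ} (hj : j ≤ q - 1) (hwt : j + k + m * q + 2 ≤ q ^ 2) :
    j + k * q + m * (q ^ 2 + 1) + 1 ∈ gkG q :=
  ⟨(0, j, k, m, 0), ⟨hj, by simp [gkWt]; omega⟩, by simp [gkPhi]⟩

lemma mem_gkG_of_single_weight_le (s : Fin (q - 2)) {j k : ℕ} (hj : j ≤ q - 1)
    (hwt : j + k + (s + 2) * q + 2 ≤ q ^ 2 + (s + 1)) :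
    j + k * q + (s + 2) * q ^ 2 + 1 ∈ gkG q := by
  refine ⟨(0, j, k, 0, Pi.single s 1), ⟨hj, ?_⟩, ?_⟩
  · have : s.1 + 1 ≤ (s.1 + 2) * q :=
      (Nat.le_succ _).trans (Nat.le_mul_of_pos_right _ (by have := s.2; omega))
    simp [gkWt, Pi.single_apply]
    omega
  · simp [gkPhi, Pi.single_apply]

lemma exists_digits {b : ℕ} (hq : 0 < q) (hb : b < q ^ 3) :
    ∃ c₀ c₁ c₂, c₀ < q ∧ c₁ < q ∧ c₂ < q ∧ b = c₂ * q ^ 2 + c₁ * q + c₀ := by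
  refine ⟨b % q, b / q % q, b / q / q, Nat.mod_lt _ hq, Nat.mod_lt _ hq, ?_, ?_⟩
  · rw [Nat.div_div_eq_div_mul, Nat.div_lt_iff_lt_mul (by positivity)]
    simpa [pow_succ, mul_assoc] using hb
  · have h1 := Nat.div_add_mod b q
    have h2 := Nat.div_add_mod (b / q) q
    nlinarith

lemma digits_add_one_mem_gkG (hq : 2 ≤ q) {c₀ c₁ c₂ : ℕ} (h₀ : c₀ < q) (h₁ : c₁ < q)
    (h₂ : c₂ < q) (hb : c₂ * q ^ 2 + c₁ * q + c₀ + 3 ≤ q ^ 3) :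
    c₂ * q ^ 2 + c₁ * q + c₀ + 1 ∈ gkG q := by
  rcases le_or_gt c₂ c₀ with hc | hc
  · obtain ⟨j, rfl⟩ := Nat.exists_eq_add_of_le' hc
    have hwt : j + c₁ + c₂ * q + 2 ≤ q ^ 2 := by
      rcases Nat.lt_or_ge (c₂ + 1) q with h | h
      · nlinarith
      · obtain rfl : q = c₂ + 1 := by omega
        have : c₁ + 1 < c₂ + 1 := by nlinarith
        nlinarith
    convert mem_gkG_of_weight_le (by omega) hwt using 1
    ring
  obtain rfl | ⟨s, rfl⟩ : c₂ = 1 ∨ ∃ s, c₂ = s + 2 :=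
    (Nat.lt_or_ge c₂ 2).imp (by omega) fun h => ⟨c₂ - 2, by omega⟩
  · obtain rfl : c₀ = 0 := by omega
    have hwt : 0 + (q + c₁) + 0 * q + 2 ≤ q ^ 2 := by
      rcases Nat.lt_or_ge q 3 with h | h
      · interval_cases q; omega
      · nlinarith
    convert mem_gkG_of_weight_le (by omega) hwt using 1
    ring
  · have hwt : c₀ + c₁ + (s + 2) * q + 2 ≤ q ^ 2 + (s + 1) := by
      rcases Nat.lt_or_ge (s + 3) q with h | h
      · nlinarith
      · obtain rfl : q = s + 3 := by omega
        rcases Nat.lt_or_ge c₁ (s + 2) with h' | h'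
        · nlinarith
        · obtain rfl : c₁ = s + 2 := by omega
          nlinarith
    convert mem_gkG_of_single_weight_le (q := q) ⟨s, by omega⟩ (by omega) hwt using 1
    ring

lemma mem_gkG_of_pos_of_le (hq : 2 ≤ q) {a : ℕ} (ha₁ : 1 ≤ a) (ha₂ : a ≤ q ^ 3 - 2) :
    a ∈ gkG q := by
  obtain ⟨c₀, c₁, c₂, h₀, h₁, h₂, hb⟩ := exists_digits (q := q) (b := a - 1) (by omega) (by omega)
  convert digits_add_one_mem_gkG hq h₀ h₁ h₂ (by omega) using 1
  omega

end GK

/-- Every integer `a` with `1 ≤ a ≤ q^3 - 2` lies in `G`, while `q^3 - 1 ∉ G` and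
`q^3 ∉ G`; hence the smallest positive element of `ℕ \ G` is `q^3 - 1`. -/
theorem gk_multiplicity (q : ℕ) (hq : IsPrimePow q) :
    (∀ a : ℕ, 1 ≤ a → a ≤ q ^ 3 - 2 → a ∈ gkG q) ∧
    q ^ 3 - 1 ∉ gkG q ∧ q ^ 3 ∉ gkG q ∧
    IsLeast {n : ℕ | 0 < n ∧ n ∉ gkG q} (q ^ 3 - 1) := by
  have hq₂ : 2 ≤ q := hq.two_le
  have hcube : 1 < q ^ 3 := Nat.one_lt_pow (by norm_num) (by omega)
  have hmem (a : ℕ) : 1 ≤ a → a ≤ q ^ 3 - 2 → a ∈ gkG q := GK.mem_gkG_of_pos_of_le hq₂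
  refine ⟨hmem, GK.cube_sub_one_notMem_gkG hq₂, GK.cube_notMem_gkG hq₂,
    ⟨⟨by omega, GK.cube_sub_one_notMem_gkG hq₂⟩, ?_⟩⟩
  rintro n ⟨hn, hnG⟩
  by_contra hlt
  exact hnG (hmem n hn (by omega))
end
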